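/- Assume #V ≥ 2 and set κ_λ := min_{x≠y} κ_λ(x,y) for λ > 0. Then for every f ∈ Lip_w^1(V), every natural number n, and all x, y ∈ V, the n-fold iterate of the resolvent satisfies ⟨J_λ^n f, δ_x − δ_y⟩ ≤ (1 − κ_λ)^n · d(x,y). (This is the discrete gradient estimate underlying the heat-flow gradient estimate ⟨h_t f, δ_x − δ_y⟩ ≤ e^{−κ̄₀ t} d(x,y).) -/

import Mathlib

/-!
By the definition of `κ_λ`, `J_λ` maps weighted 1-Lipschitz functions to `(1 - κ_λ)`-Lipschitz
ones; being positively homogeneous, it maps `K`-Lipschitz functions to `K (1 - κ_λ)`-Lipschitz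
ones, and the estimate follows by induction on `n`.

This needs `J_λ` to be well defined. With `g = D u`, the inclusion `f ∈ g + λ 𝓛(g)` is the
optimality condition of the coercive energy
`∑ₓ d_x (u x - (D⁻¹f) x)² + λ ∑ₑ w(e) (max_{p,q ∈ e} (u p - u q))²`, derived from its one-sided
directional derivatives by a separation argument; the solution is unique because `L` is monotone.
A maximum principle makes the supremum defining `KD_λ` finite.
-/

open scoped BigOperators

noncomputable section

namespace HypRicci

variable {V : Type*} [Fintype V] [DecidableEq V]

/-- A finite weighted hypergraph on vertex set `V`: a finite set of nonempty
hyperedges together with positive weights. -/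
structure Hypergraph (V : Type*) [Fintype V] [DecidableEq V] : Type _ where
  E : Finset (Finset V)
  w : Finset V → ℝ
  w_pos : ∀ e ∈ E, 0 < w e
  e_nonempty : ∀ e ∈ E, e.Nonempty

/-- Degree `d_x = ∑_{e ∋ x} w(e)`. -/
def deg (H : Hypergraph V) (x : V) : ℝ := ∑ e ∈ H.E, if x ∈ e then H.w e else 0

/-- Volume `vol(V) = ∑_x d_x`. -/
def vol (H : Hypergraph V) : ℝ := ∑ x, deg H x

/-- Weighted inner product `⟨f,g⟩ = ∑_x f(x) g(x) / d_x`. -/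
def inn (H : Hypergraph V) (f g : V → ℝ) : ℝ := ∑ x, f x * g x / deg H x

/-- Norm associated to `inn`. -/
def nrm (H : Hypergraph V) (f : V → ℝ) : ℝ := Real.sqrt (inn H f f)

/-- Indicator function `δ_x`. -/
def delta (x : V) : V → ℝ := fun z => if z = x then 1 else 0

/-- Standard (unweighted) dot product `u^⊤ v`. -/
def dot (u v : V → ℝ) : ℝ := ∑ x, u x * v x

/-- Base polytope `B_e = conv{δ_x − δ_y : x,y ∈ e}`. -/
def Bp (e : Finset V) : Set (V → ℝ) :=
  convexHull ℝ {b : V → ℝ | ∃ x ∈ e, ∃ y ∈ e, b = delta x - delta y}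

/-- The multivalued hypergraph Laplacian
`L(f) = {∑_e w(e) (b_e^⊤ f) b_e : b_e ∈ argmax_{b ∈ B_e} b^⊤ f}`. -/
def Lap (H : Hypergraph V) (f : V → ℝ) : Set (V → ℝ) :=
  { g | ∃ b : Finset V → (V → ℝ),
      (∀ e ∈ H.E, b e ∈ Bp e ∧ ∀ b' ∈ Bp e, dot b' f ≤ dot (b e) f) ∧
      g = ∑ e ∈ H.E, (H.w e * dot (b e) f) • b e }

/-- `D⁻¹ f`. -/
def Dinv (H : Hypergraph V) (f : V → ℝ) : V → ℝ := fun x => f x / deg H x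

/-- Normalized Laplacian `𝓛(f) = L(D⁻¹ f)`. -/
def NL (H : Hypergraph V) (f : V → ℝ) : Set (V → ℝ) := Lap H (Dinv H f)

/-- The resolvent `J_λ = (I + λ𝓛)⁻¹`: it sends `f` to the (unique) `g` with
`f ∈ g + λ 𝓛(g)`. -/
def Resolvent (H : Hypergraph V) (l : ℝ) (f : V → ℝ) : V → ℝ :=
  Classical.epsilon fun g => ∃ h ∈ NL H g, f = g + l • h

/-- Adjacency: `x ∼ y` iff some hyperedge contains both. -/
def Adj (H : Hypergraph V) (x y : V) : Prop := ∃ e ∈ H.E, x ∈ e ∧ y ∈ e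

/-- There is a chain of length `n` of successively adjacent vertices from `x` to `y`. -/
def chainProp (H : Hypergraph V) (x y : V) (n : ℕ) : Prop :=
  ∃ z : ℕ → V, z 0 = x ∧ z n = y ∧ ∀ i < n, Adj H (z i) (z (i + 1))

/-- Connectedness of the hypergraph. -/
def Connected (H : Hypergraph V) : Prop := ∀ x y : V, ∃ n, chainProp H x y n

/-- Graph distance (as a natural number). -/
def hdistN (H : Hypergraph V) (x y : V) : ℕ := sInf {n | chainProp H x y n}

/-- Graph distance `d(x,y)` as a real number. -/
def gdist (H : Hypergraph V) (x y : V) : ℝ := (hdistN H x y : ℝ)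

/-- Diameter `diam(H) = max_{x,y} d(x,y)`. -/
def hdiam (H : Hypergraph V) : ℝ :=
  (((Finset.univ : Finset (V × V)).sup fun p => hdistN H p.1 p.2 : ℕ) : ℝ)

/-- Weighted `1`-Lipschitz functions: `⟨f, δ_x − δ_y⟩ ≤ d(x,y)` for all `x, y`. -/
def Lip1 (H : Hypergraph V) : Set (V → ℝ) :=
  { f | ∀ x y : V, inn H f (delta x - delta y) ≤ gdist H x y }

/-- The `λ`-nonlinear Kantorovich difference. -/
def KD (H : Hypergraph V) (l : ℝ) (x y : V) : ℝ :=
  sSup { r | ∃ f ∈ Lip1 H, r = inn H (Resolvent H l f) (delta x - delta y) }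

/-- `κ_λ(x,y) = 1 − KD_λ(x,y)/d(x,y)`. -/
def kappa (H : Hypergraph V) (l : ℝ) (x y : V) : ℝ := 1 - KD H l x y / gdist H x y

/-- Lower coarse Ricci curvature `κ̲(x,y) = liminf_{λ↓0} κ_λ(x,y)/λ`. -/
def kappaLower (H : Hypergraph V) (x y : V) : EReal :=
  Filter.liminf (fun l : ℝ => ((kappa H l x y / l : ℝ) : EReal)) (nhdsWithin 0 (Set.Ioi 0))

/-- Upper coarse Ricci curvature `κ̄(x,y) = limsup_{λ↓0} κ_λ(x,y)/λ`. -/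
def kappaUpper (H : Hypergraph V) (x y : V) : EReal :=
  Filter.limsup (fun l : ℝ => ((kappa H l x y / l : ℝ) : EReal)) (nhdsWithin 0 (Set.Ioi 0))

/-- Canonical restriction `𝓛⁰ f`: the unique element of minimal norm of `𝓛(f)`. -/
def L0 (H : Hypergraph V) (f : V → ℝ) : V → ℝ :=
  Classical.epsilon fun g => g ∈ NL H f ∧ ∀ h ∈ NL H f, nrm H g ≤ nrm H h

/-- The stationary distribution `π(x) = d_x / vol(V)`. -/
def piH (H : Hypergraph V) : V → ℝ := fun x => deg H x / vol H

/-- The energy `Q(h) = (1/2) ∑_e w(e) max_{x,y ∈ e} (h(x) − h(y))²`. -/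
def Qform (H : Hypergraph V) (h : V → ℝ) : ℝ :=
  (1 / 2) * ∑ e ∈ H.E, H.w e * sSup { r | ∃ x ∈ e, ∃ y ∈ e, r = (h x - h y) ^ 2 }

open Filter Topology Matrix
open scoped Pointwise

lemma nonneg_of_eventually_nonneg_mul_add_sq {A B : ℝ}
    (h : ∀ᶠ t in 𝓝[>] (0 : ℝ), 0 ≤ t * A + t ^ 2 * B) : 0 ≤ A := by
  have hlim : Tendsto (fun t : ℝ => A + t * B) (𝓝[>] 0) (𝓝 A) := by
    have : Continuous fun t : ℝ => A + t * B := by fun_prop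
    simpa using (this.tendsto 0).mono_left nhdsWithin_le_nhds
  refine ge_of_tendsto hlim ?_
  filter_upwards [h, self_mem_nhdsWithin] with t ht (htpos : 0 < t)
  nlinarith

lemma sum_mul_add_mul_sq {ι : Type*} (s : Finset ι) (c a b : ι → ℝ) (t : ℝ) :
    ∑ i ∈ s, c i * (a i + t * b i) ^ 2 =
      ∑ i ∈ s, c i * a i ^ 2 + 2 * t * ∑ i ∈ s, c i * a i * b i +
        t ^ 2 * ∑ i ∈ s, c i * b i ^ 2 := by
  simp only [Finset.mul_sum, ← Finset.sum_add_distrib]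
  exact Finset.sum_congr rfl fun i _ => by ring

lemma finite_finsetSum {ι E : Type*} [AddCommMonoid E] (s : Finset ι) {t : ι → Set E}
    (ht : ∀ i ∈ s, (t i).Finite) : (∑ i ∈ s, t i).Finite := by
  classical
  induction s using Finset.induction_on with
  | empty => simp
  | insert i s hi ih =>
    rw [Finset.sum_insert hi]
    exact (ht i (s.mem_insert_self i)).add (ih fun j hj => ht j (Finset.mem_insert_of_mem hj))

lemma mem_convexHull_of_forall_exists_le {E : Type*} [NormedAddCommGroup E] [NormedSpace ℝ E]
    {S : Set E} (hS : S.Finite) {c : E} (h : ∀ φ : E →L[ℝ] ℝ, ∃ s ∈ S, φ c ≤ φ s) :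
    c ∈ convexHull ℝ S := by
  by_contra hc
  obtain ⟨φ, r, hφc, hφS⟩ := geometric_hahn_banach_point_closed (convex_convexHull ℝ S)
    (hS.isCompact_convexHull ℝ).isClosed hc
  obtain ⟨s, hs, hle⟩ := h (-φ)
  rw [_root_.neg_apply, _root_.neg_apply, neg_le_neg_iff] at hle
  linarith [hφS s (subset_convexHull ℝ S hs)]

lemma exists_dotProduct_eq {ι : Type*} [Fintype ι] [DecidableEq ι] (φ : (ι → ℝ) →L[ℝ] ℝ) :
    ∃ w : ι → ℝ, ∀ z, φ z = z ⬝ᵥ w :=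
  ⟨fun i => φ fun j => if i = j then 1 else 0, fun z =>
    (φ : (ι → ℝ) →ₗ[ℝ] ℝ).pi_apply_eq_sum_univ z⟩

section PairMax

variable {α : Type*}

def pairMax (s : Finset (α × α)) (u : α → ℝ) : ℝ :=
  if h : s.Nonempty then s.sup' h fun pq => u pq.1 - u pq.2 else 0

lemma le_pairMax {s : Finset (α × α)} (u : α → ℝ) {pq : α × α} (hpq : pq ∈ s) :
    u pq.1 - u pq.2 ≤ pairMax s u := by
  rw [pairMax, dif_pos ⟨pq, hpq⟩]
  exact Finset.le_sup' (fun pq : α × α => u pq.1 - u pq.2) hpq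

lemma pairMax_le {s : Finset (α × α)} (hs : s.Nonempty) {u : α → ℝ} {c : ℝ}
    (h : ∀ pq ∈ s, u pq.1 - u pq.2 ≤ c) : pairMax s u ≤ c := by
  rw [pairMax, dif_pos hs]
  exact Finset.sup'_le hs _ h

lemma exists_pairMax_eq {s : Finset (α × α)} (hs : s.Nonempty) (u : α → ℝ) :
    ∃ pq ∈ s, u pq.1 - u pq.2 = pairMax s u := by
  rw [pairMax, dif_pos hs]
  obtain ⟨pq, hpq, h⟩ := Finset.exists_mem_eq_sup' hs fun pq : α × α => u pq.1 - u pq.2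
  exact ⟨pq, hpq, h.symm⟩

@[fun_prop]
lemma continuous_pairMax (s : Finset (α × α)) : Continuous (pairMax s) := by
  by_cases hs : s.Nonempty
  · have h : pairMax s = fun u => s.sup' hs fun pq => u pq.1 - u pq.2 :=
      funext fun u => dif_pos hs
    rw [h]
    exact Continuous.finset_sup'_apply hs fun pq _ =>
      (continuous_apply pq.1).sub (continuous_apply pq.2)
  · have h : pairMax s = fun _ => 0 := funext fun u => dif_neg hs
    rw [h]
    exact continuous_const

abbrev edgeOsc (u : α → ℝ) (e : Finset α) : ℝ := pairMax (e ×ˢ e) u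

lemma edgeOsc_nonneg (u : α → ℝ) {e : Finset α} (he : e.Nonempty) : 0 ≤ edgeOsc u e := by
  obtain ⟨a, ha⟩ := he
  simpa using le_pairMax u (Finset.mk_mem_product ha ha)

def argmaxPairs (u : α → ℝ) (e : Finset α) : Finset (α × α) :=
  (e ×ˢ e).filter fun pq => u pq.1 - u pq.2 = edgeOsc u e

lemma argmaxPairs_nonempty (u : α → ℝ) {e : Finset α} (he : e.Nonempty) :
    (argmaxPairs u e).Nonempty := by
  obtain ⟨pq, hpq, h⟩ := exists_pairMax_eq (he.product he) u
  exact ⟨pq, Finset.mem_filter.2 ⟨hpq, h⟩⟩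

lemma eventually_edgeOsc_add_smul_le (u w : α → ℝ) (e : Finset α) :
    ∀ᶠ t in 𝓝[>] (0 : ℝ),
      edgeOsc (u + t • w) e ≤ edgeOsc u e + t * pairMax (argmaxPairs u e) w := by
  rcases e.eq_empty_or_nonempty with rfl | he
  · exact Eventually.of_forall fun t => by simp [pairMax, argmaxPairs]
  have hpair : ∀ pq ∈ e ×ˢ e, ∀ᶠ t in 𝓝[>] (0 : ℝ),
      u pq.1 - u pq.2 + t * (w pq.1 - w pq.2) ≤
        edgeOsc u e + t * pairMax (argmaxPairs u e) w := by
    intro pq hpq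
    by_cases hmax : u pq.1 - u pq.2 = edgeOsc u e
    · have hw := le_pairMax w (Finset.mem_filter.2 ⟨hpq, hmax⟩ : pq ∈ argmaxPairs u e)
      filter_upwards [self_mem_nhdsWithin] with t (ht : 0 < t)
      rw [hmax]
      exact add_le_add le_rfl (mul_le_mul_of_nonneg_left hw ht.le)
    · have hlt := lt_of_le_of_ne (le_pairMax u hpq) hmax
      have hlim : ∀ a b : ℝ, Tendsto (fun t : ℝ => a + t * b) (𝓝 0) (𝓝 a) := fun a b => by
        simpa using ((by fun_prop : Continuous fun t : ℝ => a + t * b).tendsto 0)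
      exact (((hlim _ _).eventually_lt (hlim _ _) hlt).mono fun t ht => ht.le).filter_mono
        nhdsWithin_le_nhds
  filter_upwards [(Filter.eventually_all_finset _).2 hpair] with t ht
  refine pairMax_le (he.product he) fun pq hpq => ?_
  simpa [mul_sub, add_sub_add_comm] using ht pq hpq

end PairMax

section DotProduct

variable {α : Type*} [Fintype α]

lemma dot_eq_dotProduct (u v : α → ℝ) : dot u v = u ⬝ᵥ v := rfl

lemma isLinearMap_dot (u : α → ℝ) : IsLinearMap ℝ fun b : α → ℝ => dot b u :=
  ⟨fun b₁ b₂ => add_dotProduct b₁ b₂ u, fun c b => smul_dotProduct c b u⟩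

lemma dot_sum_smul {ι : Type*} (s : Finset ι) (c : ι → ℝ) (b : ι → α → ℝ) (u : α → ℝ) :
    dot (∑ i ∈ s, c i • b i) u = ∑ i ∈ s, c i * dot (b i) u := by
  simp only [dot_eq_dotProduct, sum_dotProduct, smul_dotProduct, smul_eq_mul]

end DotProduct

section BasePolytope

variable {α : Type*} [DecidableEq α]

lemma delta_eq_single (x : α) : delta x = Pi.single x 1 := by
  ext z
  simp [delta, Pi.single_apply]

lemma delta_sub_delta_mem_Bp {e : Finset α} {p q : α} (hp : p ∈ e) (hq : q ∈ e) :
    delta p - delta q ∈ Bp e :=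
  subset_convexHull ℝ _ ⟨p, hp, q, hq, rfl⟩

lemma neg_mem_Bp {e : Finset α} {b : α → ℝ} (hb : b ∈ Bp e) : -b ∈ Bp e := by
  have hgen : -{b : α → ℝ | ∃ x ∈ e, ∃ y ∈ e, b = delta x - delta y} =
      {b : α → ℝ | ∃ x ∈ e, ∃ y ∈ e, b = delta x - delta y} := by
    ext b
    simp only [Set.mem_neg, Set.mem_ofPred_eq, neg_eq_iff_eq_neg, neg_sub]
    exact ⟨fun ⟨x, hx, y, hy, h⟩ => ⟨y, hy, x, hx, h⟩, fun ⟨x, hx, y, hy, h⟩ => ⟨y, hy, x, hx, h⟩⟩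
  rw [Bp, ← hgen, convexHull_neg] at *
  simpa using hb

lemma Bp_subset_of_le {e : Finset α} {φ : (α → ℝ) → ℝ} (hφ : IsLinearMap ℝ φ) {c : ℝ}
    (h : ∀ p ∈ e, ∀ q ∈ e, φ (delta p - delta q) ≤ c) : Bp e ⊆ {b | φ b ≤ c} :=
  convexHull_min (by rintro _ ⟨p, hp, q, hq, rfl⟩; exact h p hp q hq)
    (convex_halfSpace_le hφ c)

lemma dot_delta_sub_delta [Fintype α] (p q : α) (u : α → ℝ) :
    dot (delta p - delta q) u = u p - u q := by
  simp [dot_eq_dotProduct, delta_eq_single, sub_dotProduct]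

def argmaxGens (u : α → ℝ) (e : Finset α) : Set (α → ℝ) :=
  (fun pq : α × α => delta pq.1 - delta pq.2) '' ↑(argmaxPairs u e)

lemma argmaxGens_finite (u : α → ℝ) (e : Finset α) : (argmaxGens u e).Finite :=
  (argmaxPairs u e).finite_toSet.image _

end BasePolytope

section Laplacian

variable {α : Type*} [Fintype α] [DecidableEq α]

lemma dot_le_edgeOsc {e : Finset α} {b : α → ℝ} (hb : b ∈ Bp e) (u : α → ℝ) :
    dot b u ≤ edgeOsc u e :=
  Bp_subset_of_le (isLinearMap_dot u)
    (fun p hp q hq => by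
      rw [dot_delta_sub_delta]
      exact le_pairMax u (Finset.mk_mem_product hp hq)) hb

lemma dot_eq_edgeOsc_of_forall_le {e : Finset α} (he : e.Nonempty) {u b : α → ℝ} (hb : b ∈ Bp e)
    (hmax : ∀ b' ∈ Bp e, dot b' u ≤ dot b u) : dot b u = edgeOsc u e := by
  refine le_antisymm (dot_le_edgeOsc hb u) ?_
  obtain ⟨⟨p, q⟩, hpq, h⟩ := exists_pairMax_eq (he.product he) u
  rw [Finset.mem_product] at hpq
  calc edgeOsc u e = dot (delta p - delta q) u := h.symm.trans (dot_delta_sub_delta p q u).symm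
    _ ≤ dot b u := hmax _ (delta_sub_delta_mem_Bp hpq.1 hpq.2)

lemma apply_nonneg_of_dot_eq_edgeOsc {e : Finset α} {u b : α → ℝ} (hb : b ∈ Bp e)
    (hbu : dot b u = edgeOsc u e) (hpos : 0 < edgeOsc u e) {a : α}
    (ha : ∀ p ∈ e, u p ≤ u a) : 0 ≤ b a := by
  set M := edgeOsc u e
  -- `b ↦ bᵀu / M - b a` is at most `1` on the generators of `B_e`, and equals `1 - b a` at `b`
  have hlin : IsLinearMap ℝ fun b : α → ℝ => dot b u / M - b a :=
    ⟨fun b₁ b₂ => by simp only [dot_eq_dotProduct, add_dotProduct, Pi.add_apply]; ring,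
      fun c b => by
        simp only [dot_eq_dotProduct, smul_dotProduct, Pi.smul_apply, smul_eq_mul]; ring⟩
  have hgen : ∀ p ∈ e, ∀ q ∈ e, dot (delta p - delta q) u / M - (delta p - delta q) a ≤ 1 := by
    intro p hp q hq
    rw [dot_delta_sub_delta, Pi.sub_apply]
    have hle : (u p - u q) / M ≤ 1 :=
      (div_le_one hpos).2 (le_pairMax u (Finset.mk_mem_product hp hq))
    by_cases hqa : q = a
    · subst hqa
      have : (u p - u q) / M ≤ 0 := div_nonpos_of_nonpos_of_nonneg (by linarith [ha p hp]) hpos.le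
      simp only [delta]
      split_ifs <;> linarith
    · simp only [delta, if_neg (Ne.symm hqa)]
      split_ifs <;> linarith
  have := Bp_subset_of_le hlin hgen hb
  simp only [Set.mem_ofPred_eq, hbu, div_self hpos.ne'] at this
  linarith

lemma exists_eq_sum_of_mem_Lap (H : Hypergraph α) {u h : α → ℝ} (hh : h ∈ Lap H u) :
    ∃ b : Finset α → α → ℝ, (∀ e ∈ H.E, b e ∈ Bp e ∧ dot (b e) u = edgeOsc u e) ∧
      h = ∑ e ∈ H.E, (H.w e * edgeOsc u e) • b e := by
  obtain ⟨b, hb, rfl⟩ := hh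
  have hosc : ∀ e ∈ H.E, dot (b e) u = edgeOsc u e := fun e he =>
    dot_eq_edgeOsc_of_forall_le (H.e_nonempty e he) (hb e he).1 (hb e he).2
  exact ⟨b, fun e he => ⟨(hb e he).1, hosc e he⟩,
    Finset.sum_congr rfl fun e he => by rw [hosc e he]⟩

lemma dot_le_of_mem_Lap (H : Hypergraph α) {u h : α → ℝ} (hh : h ∈ Lap H u) (u' : α → ℝ) :
    dot h u' ≤ ∑ e ∈ H.E, H.w e * (edgeOsc u e * edgeOsc u' e) := by
  obtain ⟨b, hb, rfl⟩ := exists_eq_sum_of_mem_Lap H hh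
  rw [dot_sum_smul]
  refine Finset.sum_le_sum fun e he => ?_
  rw [mul_assoc]
  exact mul_le_mul_of_nonneg_left (mul_le_mul_of_nonneg_left (dot_le_edgeOsc (hb e he).1 u')
    (edgeOsc_nonneg u (H.e_nonempty e he))) (H.w_pos e he).le

lemma dot_self_of_mem_Lap (H : Hypergraph α) {u h : α → ℝ} (hh : h ∈ Lap H u) :
    dot h u = ∑ e ∈ H.E, H.w e * (edgeOsc u e * edgeOsc u e) := by
  obtain ⟨b, hb, rfl⟩ := exists_eq_sum_of_mem_Lap H hh
  rw [dot_sum_smul]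
  exact Finset.sum_congr rfl fun e he => by rw [(hb e he).2, mul_assoc]

lemma Lap_monotone (H : Hypergraph α) {u₁ u₂ h₁ h₂ : α → ℝ} (hh₁ : h₁ ∈ Lap H u₁)
    (hh₂ : h₂ ∈ Lap H u₂) : 0 ≤ dot (h₁ - h₂) (u₁ - u₂) := by
  have key : 0 ≤ ∑ e ∈ H.E, H.w e * (edgeOsc u₁ e - edgeOsc u₂ e) ^ 2 :=
    Finset.sum_nonneg fun e he => mul_nonneg (H.w_pos e he).le (sq_nonneg _)
  have h11 := dot_self_of_mem_Lap H hh₁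
  have h22 := dot_self_of_mem_Lap H hh₂
  have h12 := dot_le_of_mem_Lap H hh₁ u₂
  have h21 := dot_le_of_mem_Lap H hh₂ u₁
  simp only [dot_eq_dotProduct, sub_dotProduct, dotProduct_sub] at h11 h22 h12 h21 ⊢
  have hexp : ∑ e ∈ H.E, H.w e * (edgeOsc u₁ e - edgeOsc u₂ e) ^ 2 =
      ∑ e ∈ H.E, H.w e * (edgeOsc u₁ e * edgeOsc u₁ e) +
        ∑ e ∈ H.E, H.w e * (edgeOsc u₂ e * edgeOsc u₂ e) -
        ∑ e ∈ H.E, H.w e * (edgeOsc u₁ e * edgeOsc u₂ e) -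
        ∑ e ∈ H.E, H.w e * (edgeOsc u₂ e * edgeOsc u₁ e) := by
    simp only [← Finset.sum_add_distrib, ← Finset.sum_sub_distrib]
    exact Finset.sum_congr rfl fun e _ => by ring
  linarith

lemma smul_mem_Lap (H : Hypergraph α) {c : ℝ} (hc : 0 ≤ c) {u h : α → ℝ} (hh : h ∈ Lap H u) :
    c • h ∈ Lap H (c • u) := by
  obtain ⟨b, hb, rfl⟩ := hh
  refine ⟨b, fun e he => ⟨(hb e he).1, fun b' hb' => ?_⟩, ?_⟩
  · simp only [dot_eq_dotProduct, dotProduct_smul, smul_eq_mul] at hb ⊢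
    exact mul_le_mul_of_nonneg_left ((hb e he).2 b' hb') hc
  · simp only [Finset.smul_sum, smul_smul, dot_eq_dotProduct, dotProduct_smul, smul_eq_mul]
    exact Finset.sum_congr rfl fun e _ => by ring_nf

lemma neg_mem_Lap (H : Hypergraph α) {u h : α → ℝ} (hh : h ∈ Lap H u) : -h ∈ Lap H (-u) := by
  obtain ⟨b, hb, rfl⟩ := hh
  refine ⟨fun e => -b e, fun e he => ⟨neg_mem_Bp (hb e he).1, fun b' hb' => ?_⟩, ?_⟩
  · simpa [dot_eq_dotProduct] using (hb e he).2 (-b') (neg_mem_Bp hb')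
  · simp [dot_eq_dotProduct, ← Finset.sum_neg_distrib]

lemma apply_nonneg_of_mem_Lap (H : Hypergraph α) {u h : α → ℝ} (hh : h ∈ Lap H u) {a : α}
    (ha : ∀ p, u p ≤ u a) : 0 ≤ h a := by
  obtain ⟨b, hb, rfl⟩ := exists_eq_sum_of_mem_Lap H hh
  rw [Finset.sum_apply]
  refine Finset.sum_nonneg fun e he => ?_
  rw [Pi.smul_apply, smul_eq_mul]
  rcases (edgeOsc_nonneg u (H.e_nonempty e he)).eq_or_lt with hzero | hpos
  · simp [← hzero]
  · exact mul_nonneg (mul_nonneg (H.w_pos e he).le hpos.le)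
      (apply_nonneg_of_dot_eq_edgeOsc (hb e he).1 (hb e he).2 hpos fun p _ => ha p)

lemma apply_nonpos_of_mem_Lap (H : Hypergraph α) {u h : α → ℝ} (hh : h ∈ Lap H u) {a : α}
    (ha : ∀ p, u a ≤ u p) : h a ≤ 0 := by
  have := apply_nonneg_of_mem_Lap H (neg_mem_Lap H hh) (a := a) fun p => neg_le_neg (ha p)
  simpa using this

lemma exists_mem_argmaxGens_dot_eq (u : α → ℝ) {e : Finset α} (he : e.Nonempty) (w : α → ℝ) :
    ∃ b ∈ argmaxGens u e, dot b w = pairMax (argmaxPairs u e) w := by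
  obtain ⟨pq, hpq, h⟩ := exists_pairMax_eq (argmaxPairs_nonempty u he) w
  exact ⟨_, Set.mem_image_of_mem _ hpq, (dot_delta_sub_delta _ _ w).trans h⟩

lemma convexHull_argmaxGens_subset (u : α → ℝ) (e : Finset α) :
    convexHull ℝ (argmaxGens u e) ⊆ Bp e ∩ {b | dot b u = edgeOsc u e} := by
  refine convexHull_min ?_
    ((convex_convexHull ℝ _).inter (convex_hyperplane (isLinearMap_dot u) _))
  rintro _ ⟨⟨p, q⟩, hpq, rfl⟩
  obtain ⟨hpq, hmax⟩ := Finset.mem_filter.1 hpq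
  rw [Finset.mem_product] at hpq
  exact ⟨delta_sub_delta_mem_Bp hpq.1 hpq.2, (dot_delta_sub_delta p q u).trans hmax⟩

end Laplacian

lemma inn_eq_dotProduct_Dinv (H : Hypergraph V) (f g : V → ℝ) : inn H f g = f ⬝ᵥ Dinv H g := by
  simp only [inn, Dinv, dotProduct, mul_div_assoc]

lemma inn_delta_sub_delta (H : Hypergraph V) (g : V → ℝ) (x y : V) :
    inn H g (delta x - delta y) = Dinv H g x - Dinv H g y := by
  rw [← dot_delta_sub_delta]
  exact Finset.sum_congr rfl fun z _ => by simp only [Dinv]; ring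

lemma Dinv_sub (H : Hypergraph V) (g₁ g₂ : V → ℝ) : Dinv H (g₁ - g₂) = Dinv H g₁ - Dinv H g₂ :=
  funext fun x => sub_div (g₁ x) (g₂ x) (deg H x)

lemma Dinv_smul (H : Hypergraph V) (c : ℝ) (g : V → ℝ) : Dinv H (c • g) = c • Dinv H g :=
  funext fun x => mul_div_assoc c (g x) (deg H x)

lemma smul_mem_NL (H : Hypergraph V) {c : ℝ} (hc : 0 ≤ c) {g h : V → ℝ} (hh : h ∈ NL H g) :
    c • h ∈ NL H (c • g) := by
  rw [NL, Dinv_smul]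
  exact smul_mem_Lap H hc hh

section Existence

def resolventEnergy (H : Hypergraph V) (l : ℝ) (f u : V → ℝ) : ℝ :=
  ∑ x, deg H x * (u x - Dinv H f x) ^ 2 + l * ∑ e ∈ H.E, H.w e * edgeOsc u e ^ 2

lemma continuous_resolventEnergy (H : Hypergraph V) (l : ℝ) (f : V → ℝ) :
    Continuous (resolventEnergy H l f) := by
  unfold resolventEnergy
  fun_prop

lemma exists_forall_resolventEnergy_le (H : Hypergraph V) (hdeg : ∀ x, 0 < deg H x) {l : ℝ}
    (hl : 0 ≤ l) (f : V → ℝ) : ∃ u, ∀ u', resolventEnergy H l f u ≤ resolventEnergy H l f u' := by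
  set v := Dinv H f
  set P := resolventEnergy H l f v
  have hcoord : ∀ u x, deg H x * (u x - v x) ^ 2 ≤ resolventEnergy H l f u := fun u x =>
    le_add_of_le_of_nonneg
      (Finset.single_le_sum (f := fun y => deg H y * (u y - v y) ^ 2)
        (fun y _ => mul_nonneg (hdeg y).le (sq_nonneg _)) (Finset.mem_univ x))
      (mul_nonneg hl (Finset.sum_nonneg fun e he => mul_nonneg (H.w_pos e he).le (sq_nonneg _)))
  refine (continuous_resolventEnergy H l f).exists_forall_le' v ?_
  filter_upwards [tendsto_norm_cocompact_atTop.eventually_gt_atTop (‖v‖ + ∑ x, √(P / deg H x))]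
    with u hu
  by_contra! hlt
  have hclose : ‖u - v‖ ≤ ∑ x, √(P / deg H x) := by
    refine (pi_norm_le_iff_of_nonneg (by positivity)).2 fun x => ?_
    have hx : (u x - v x) ^ 2 ≤ P / deg H x := by
      rw [le_div_iff₀ (hdeg x)]
      linarith [hcoord u x]
    calc ‖(u - v) x‖ = |u x - v x| := Real.norm_eq_abs _
      _ ≤ √(P / deg H x) := Real.abs_le_sqrt hx
      _ ≤ ∑ y, √(P / deg H y) := Finset.single_le_sum (f := fun y => √(P / deg H y))
        (fun y _ => Real.sqrt_nonneg _) (Finset.mem_univ x)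
  linarith [norm_le_norm_add_norm_sub' u v]

lemma resolventEnergy_firstOrder (H : Hypergraph V) {l : ℝ} (hl : 0 ≤ l) (f : V → ℝ)
    {u : V → ℝ} (hmin : ∀ u', resolventEnergy H l f u ≤ resolventEnergy H l f u') (w : V → ℝ) :
    0 ≤ ∑ x, deg H x * (u x - Dinv H f x) * w x +
      l * ∑ e ∈ H.E, H.w e * edgeOsc u e * pairMax (argmaxPairs u e) w := by
  set α : Finset V → ℝ := fun e => pairMax (argmaxPairs u e) w
  suffices h : 0 ≤ 2 * (∑ x, deg H x * (u x - Dinv H f x) * w x +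
      l * ∑ e ∈ H.E, H.w e * edgeOsc u e * α e) by linarith
  refine nonneg_of_eventually_nonneg_mul_add_sq
    (B := ∑ x, deg H x * w x ^ 2 + l * ∑ e ∈ H.E, H.w e * α e ^ 2) ?_
  filter_upwards [(eventually_all_finset H.E).2 fun e _ => eventually_edgeOsc_add_smul_le u w e,
    self_mem_nhdsWithin] with t hosc (ht : 0 < t)
  have hupper : resolventEnergy H l f (u + t • w) ≤
      ∑ x, deg H x * ((u x - Dinv H f x) + t * w x) ^ 2 +
        l * ∑ e ∈ H.E, H.w e * (edgeOsc u e + t * α e) ^ 2 := by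
    refine add_le_add (le_of_eq (Finset.sum_congr rfl fun x _ => ?_))
      (mul_le_mul_of_nonneg_left (Finset.sum_le_sum fun e he => ?_) hl)
    · simp only [Pi.add_apply, Pi.smul_apply, smul_eq_mul]
      ring
    · exact mul_le_mul_of_nonneg_left
        (pow_le_pow_left₀ (edgeOsc_nonneg _ (H.e_nonempty e he)) (hosc e he) 2) (H.w_pos e he).le
  have hEu : resolventEnergy H l f u = ∑ x, deg H x * (u x - Dinv H f x) ^ 2 +
      l * ∑ e ∈ H.E, H.w e * edgeOsc u e ^ 2 := rfl
  rw [sum_mul_add_mul_sq, sum_mul_add_mul_sq] at hupper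
  linarith [hmin (u + t • w)]

lemma Dinv_deg_mul (H : Hypergraph V) (hdeg : ∀ x, 0 < deg H x) (u : V → ℝ) :
    Dinv H (fun x => deg H x * u x) = u :=
  funext fun x => mul_div_cancel_left₀ (u x) (hdeg x).ne'

lemma exists_mem_NL_eq_add (H : Hypergraph V) (hdeg : ∀ x, 0 < deg H x) {l : ℝ} (hl : 0 ≤ l)
    (f : V → ℝ) : ∃ g, ∃ h ∈ NL H g, f = g + l • h := by
  obtain ⟨u, hmin⟩ := exists_forall_resolventEnergy_le H hdeg hl f
  set c : Finset V → ℝ := fun e => l * H.w e * edgeOsc u e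
  set g : V → ℝ := fun x => deg H x * u x
  -- a functional separating `f - g` from this hull would violate the first-order condition
  have hmem : f - g ∈ convexHull ℝ (∑ e ∈ H.E, c e • argmaxGens u e) := by
    refine mem_convexHull_of_forall_exists_le
      (finite_finsetSum _ fun e _ => (argmaxGens_finite u e).smul_set) fun φ => ?_
    obtain ⟨w, hw⟩ := exists_dotProduct_eq φ
    choose! b hb hbw using fun e (he : e ∈ H.E) =>
      exists_mem_argmaxGens_dot_eq u (H.e_nonempty e he) w
    refine ⟨∑ e ∈ H.E, c e • b e,
      Set.finsetSum_mem_finsetSum _ _ _ fun e he => Set.smul_mem_smul_set (hb e he), ?_⟩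
    have hfg : (f - g) ⬝ᵥ w = -∑ x, deg H x * (u x - Dinv H f x) * w x := by
      simp only [dotProduct, ← Finset.sum_neg_distrib]
      refine Finset.sum_congr rfl fun x _ => ?_
      simp only [Pi.sub_apply, g, Dinv]
      field_simp [(hdeg x).ne']
      ring
    have hsum : (∑ e ∈ H.E, c e • b e) ⬝ᵥ w =
        l * ∑ e ∈ H.E, H.w e * edgeOsc u e * pairMax (argmaxPairs u e) w := by
      simp only [sum_dotProduct, smul_dotProduct, smul_eq_mul, Finset.mul_sum]
      refine Finset.sum_congr rfl fun e he => ?_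
      rw [← dot_eq_dotProduct, hbw e he]
      ring
    rw [hw, hw, hfg, hsum]
    linarith [resolventEnergy_firstOrder H hl f hmin w]
  rw [convexHull_sum, Set.mem_finsetSum] at hmem
  obtain ⟨k, hk, hksum⟩ := hmem
  choose! b hb hbk using fun e (he : e ∈ H.E) =>
    Set.mem_smul_set.1 ((convexHull_smul (c e) (argmaxGens u e)) ▸ hk he)
  have hDinv : Dinv H g = u := Dinv_deg_mul H hdeg u
  refine ⟨g, ∑ e ∈ H.E, (H.w e * dot (b e) u) • b e, ⟨b, fun e he => ?_, by rw [hDinv]⟩, ?_⟩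
  · obtain ⟨hbB, hbu⟩ := convexHull_argmaxGens_subset u e (hb e he)
    rw [hDinv]
    exact ⟨hbB, fun b' hb' => hbu ▸ dot_le_edgeOsc hb' u⟩
  · have hterm : ∀ e ∈ H.E, l • ((H.w e * dot (b e) u) • b e) = k e := fun e he => by
      rw [(convexHull_argmaxGens_subset u e (hb e he)).2, smul_smul, ← mul_assoc]
      exact hbk e he
    rw [Finset.smul_sum, Finset.sum_congr rfl hterm, hksum]
    abel

end Existence

section Resolvent

variable (H : Hypergraph V) (hdeg : ∀ x, 0 < deg H x)
include hdeg

lemma eq_zero_of_inn_self_nonpos {g : V → ℝ} (h : inn H g g ≤ 0) : g = 0 := by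
  have hnonneg : ∀ x ∈ Finset.univ, 0 ≤ g x * g x / deg H x :=
    fun x _ => div_nonneg (mul_self_nonneg _) (hdeg x).le
  have hzero := (Finset.sum_eq_zero_iff_of_nonneg hnonneg).1
    (le_antisymm h (Finset.sum_nonneg hnonneg))
  funext x
  simpa [(hdeg x).ne'] using hzero x (Finset.mem_univ x)

variable {l : ℝ} (hl : 0 ≤ l)
include hl

lemma eq_of_mem_NL_of_add_eq {g₁ g₂ h₁ h₂ : V → ℝ} (hh₁ : h₁ ∈ NL H g₁) (hh₂ : h₂ ∈ NL H g₂)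
    (heq : g₁ + l • h₁ = g₂ + l • h₂) : g₁ = g₂ := by
  have hdiff : g₁ - g₂ = -(l • (h₁ - h₂)) := by
    rw [smul_sub, neg_sub, eq_sub_iff_add_eq, sub_add_eq_add_sub, heq, add_sub_cancel_left]
  have hmono := Lap_monotone H hh₁ hh₂
  rw [← sub_eq_zero]
  refine eq_zero_of_inn_self_nonpos H hdeg ?_
  rw [inn_eq_dotProduct_Dinv, Dinv_sub, hdiff, neg_dotProduct, smul_dotProduct, smul_eq_mul,
    ← dot_eq_dotProduct]
  exact neg_nonpos.2 (mul_nonneg hl hmono)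

lemma Resolvent_spec (f : V → ℝ) : ∃ h ∈ NL H (Resolvent H l f), f = Resolvent H l f + l • h :=
  Classical.epsilon_spec (exists_mem_NL_eq_add H hdeg hl f)

lemma Resolvent_eq {f g h : V → ℝ} (hh : h ∈ NL H g) (hf : f = g + l • h) :
    Resolvent H l f = g := by
  obtain ⟨h', hh', hf'⟩ := Resolvent_spec H hdeg hl f
  exact eq_of_mem_NL_of_add_eq H hdeg hl hh' hh (hf'.symm.trans hf)

lemma Resolvent_smul {c : ℝ} (hc : 0 ≤ c) (f : V → ℝ) :
    Resolvent H l (c • f) = c • Resolvent H l f := by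
  obtain ⟨h, hh, hf⟩ := Resolvent_spec H hdeg hl f
  refine Resolvent_eq H hdeg hl (smul_mem_NL H hc hh) ?_
  rw [smul_comm l c h, ← smul_add, ← hf]

lemma Resolvent_zero : Resolvent H l 0 = 0 := by
  simpa using Resolvent_smul H hdeg hl le_rfl 0

lemma Dinv_Resolvent_le_of_isMax (f : V → ℝ) {a : V}
    (ha : ∀ p, Dinv H (Resolvent H l f) p ≤ Dinv H (Resolvent H l f) a) :
    Dinv H (Resolvent H l f) a ≤ Dinv H f a := by
  obtain ⟨h, hh, hf⟩ := Resolvent_spec H hdeg hl f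
  have hpos : 0 ≤ l * h a / deg H a :=
    div_nonneg (mul_nonneg hl (apply_nonneg_of_mem_Lap H hh ha)) (hdeg a).le
  conv_rhs => rw [hf]
  simp only [Dinv, Pi.add_apply, Pi.smul_apply, smul_eq_mul, add_div] at hpos ⊢
  linarith

lemma Dinv_le_Dinv_Resolvent_of_isMin (f : V → ℝ) {a : V}
    (ha : ∀ p, Dinv H (Resolvent H l f) a ≤ Dinv H (Resolvent H l f) p) :
    Dinv H f a ≤ Dinv H (Resolvent H l f) a := by
  obtain ⟨h, hh, hf⟩ := Resolvent_spec H hdeg hl f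
  have hneg : l * h a / deg H a ≤ 0 :=
    div_nonpos_of_nonpos_of_nonneg (mul_nonpos_of_nonneg_of_nonpos hl
      (apply_nonpos_of_mem_Lap H hh ha)) (hdeg a).le
  conv_lhs => rw [hf]
  simp only [Dinv, Pi.add_apply, Pi.smul_apply, smul_eq_mul, add_div] at hneg ⊢
  linarith

end Resolvent

section Curvature

variable (H : Hypergraph V)

lemma gdist_nonneg (x y : V) : 0 ≤ gdist H x y := Nat.cast_nonneg _

lemma gdist_self (x : V) : gdist H x x = 0 := by
  rw [gdist, hdistN, Nat.cast_eq_zero, Nat.sInf_eq_zero]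
  exact Or.inl ⟨fun _ => x, rfl, rfl, fun i hi => absurd hi (Nat.not_lt_zero i)⟩

lemma gdist_pos (hconn : Connected H) {x y : V} (hxy : x ≠ y) : 0 < gdist H x y := by
  have hchain : chainProp H x y (hdistN H x y) := Nat.sInf_mem (hconn x y)
  refine Nat.cast_pos.2 (Nat.pos_of_ne_zero fun h0 => hxy ?_)
  obtain ⟨z, hz0, hzn, -⟩ := hchain
  rw [h0] at hzn
  exact hz0.symm.trans hzn

lemma gdist_le_hdiam (x y : V) : gdist H x y ≤ hdiam H :=
  Nat.cast_le.2 (Finset.le_sup (f := fun p : V × V => hdistN H p.1 p.2) (Finset.mem_univ (x, y)))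

lemma inn_smul_left (c : ℝ) (g k : V → ℝ) : inn H (c • g) k = c * inn H g k := by
  simp only [inn_eq_dotProduct_Dinv, smul_dotProduct, smul_eq_mul]

lemma zero_mem_Lip1 : (0 : V → ℝ) ∈ Lip1 H := fun x y => by
  simpa [inn] using gdist_nonneg H x y

/-- `κ_λ = min_{x ≠ y} κ_λ(x, y)`; the `sInf` is `0` when `V` has a single point. -/
def kappaMin (H : Hypergraph V) (l : ℝ) : ℝ := sInf {r : ℝ | ∃ a b : V, a ≠ b ∧ r = kappa H l a b}

lemma kappaMin_le (l : ℝ) {x y : V} (hxy : x ≠ y) : kappaMin H l ≤ kappa H l x y := by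
  refine csInf_le ?_ ⟨x, y, hxy, rfl⟩
  refine ((Set.finite_range fun p : V × V => kappa H l p.1 p.2).subset ?_).bddBelow
  rintro _ ⟨a, b, -, rfl⟩
  exact ⟨(a, b), rfl⟩

variable (hdeg : ∀ x, 0 < deg H x) {l : ℝ} (hl : 0 ≤ l)
include hdeg hl

lemma inn_Resolvent_le_hdiam {f : V → ℝ} (hf : f ∈ Lip1 H) (x y : V) :
    inn H (Resolvent H l f) (delta x - delta y) ≤ hdiam H := by
  set u := Dinv H (Resolvent H l f)
  obtain ⟨a, -, ha⟩ := Finset.exists_max_image Finset.univ u ⟨x, Finset.mem_univ x⟩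
  obtain ⟨b, -, hb⟩ := Finset.exists_min_image Finset.univ u ⟨x, Finset.mem_univ x⟩
  rw [inn_delta_sub_delta]
  calc u x - u y ≤ u a - u b := sub_le_sub (ha x (Finset.mem_univ x)) (hb y (Finset.mem_univ y))
    _ ≤ Dinv H f a - Dinv H f b :=
      sub_le_sub (Dinv_Resolvent_le_of_isMax H hdeg hl f fun p => ha p (Finset.mem_univ p))
        (Dinv_le_Dinv_Resolvent_of_isMin H hdeg hl f fun p => hb p (Finset.mem_univ p))
    _ = inn H f (delta a - delta b) := (inn_delta_sub_delta H f a b).symm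
    _ ≤ gdist H a b := hf a b
    _ ≤ hdiam H := gdist_le_hdiam H a b

lemma le_KD {f : V → ℝ} (hf : f ∈ Lip1 H) (x y : V) :
    inn H (Resolvent H l f) (delta x - delta y) ≤ KD H l x y :=
  le_csSup ⟨hdiam H, by rintro _ ⟨f, hf, rfl⟩; exact inn_Resolvent_le_hdiam H hdeg hl hf x y⟩
    ⟨f, hf, rfl⟩

lemma KD_nonneg (x y : V) : 0 ≤ KD H l x y := by
  simpa [Resolvent_zero H hdeg hl, inn] using le_KD H hdeg hl (zero_mem_Lip1 H) x y

lemma kappaMin_le_one : kappaMin H l ≤ 1 := by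
  rcases Set.eq_empty_or_nonempty {r : ℝ | ∃ a b : V, a ≠ b ∧ r = kappa H l a b} with
    h | ⟨_, a, b, hab, rfl⟩
  · simp [kappaMin, h]
  · refine (kappaMin_le H l hab).trans ?_
    rw [kappa, sub_le_self_iff]
    exact div_nonneg (KD_nonneg H hdeg hl a b) (gdist_nonneg H a b)

lemma inn_Resolvent_le_of_mem_Lip1 (hconn : Connected H) {f : V → ℝ} (hf : f ∈ Lip1 H) (x y : V) :
    inn H (Resolvent H l f) (delta x - delta y) ≤ (1 - kappaMin H l) * gdist H x y := by
  rcases eq_or_ne x y with rfl | hxy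
  · rw [inn_delta_sub_delta, sub_self, gdist_self, mul_zero]
  have hd := gdist_pos H hconn hxy
  calc inn H (Resolvent H l f) (delta x - delta y) ≤ KD H l x y := le_KD H hdeg hl hf x y
    _ = (1 - kappa H l x y) * gdist H x y := by rw [kappa]; field_simp; ring
    _ ≤ (1 - kappaMin H l) * gdist H x y := by gcongr; exact kappaMin_le H l hxy

end Curvature

lemma inn_Resolvent_le_of_forall_le (H : Hypergraph V) (hconn : Connected H)
    (hdeg : ∀ x, 0 < deg H x) {l : ℝ} (hl : 0 ≤ l) {g : V → ℝ} {K : ℝ} (hK : 0 ≤ K)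
    (hg : ∀ x y, inn H g (delta x - delta y) ≤ K * gdist H x y) (x y : V) :
    inn H (Resolvent H l g) (delta x - delta y) ≤ K * (1 - kappaMin H l) * gdist H x y := by
  have hpos : ∀ K' > 0, K ≤ K' →
      inn H (Resolvent H l g) (delta x - delta y) ≤ K' * (1 - kappaMin H l) * gdist H x y := by
    intro K' hK' hKK'
    have hmem : K'⁻¹ • g ∈ Lip1 H := fun p q => by
      rw [inn_smul_left, inv_mul_le_iff₀ hK']
      exact (hg p q).trans (mul_le_mul_of_nonneg_right hKK' (gdist_nonneg H p q))
    have hJ : Resolvent H l g = K' • Resolvent H l (K'⁻¹ • g) := by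
      rw [← Resolvent_smul H hdeg hl hK'.le, smul_inv_smul₀ hK'.ne']
    rw [hJ, inn_smul_left, mul_assoc]
    exact mul_le_mul_of_nonneg_left (inn_Resolvent_le_of_mem_Lip1 H hdeg hl hconn hmem x y) hK'.le
  rcases hK.eq_or_lt with rfl | hK
  · have hlim : Tendsto (fun K' : ℝ => K' * (1 - kappaMin H l) * gdist H x y) (𝓝[>] 0)
        (𝓝 (0 * (1 - kappaMin H l) * gdist H x y)) :=
      ((by fun_prop : Continuous fun K' : ℝ => K' * (1 - kappaMin H l) * gdist H x y).tendsto
        0).mono_left nhdsWithin_le_nhds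
    exact ge_of_tendsto hlim (eventually_nhdsWithin_of_forall fun K' hK' => hpos K' hK' hK'.le)
  · exact hpos K hK le_rfl

theorem stmt17_general (H : Hypergraph V) (hconn : Connected H)
    (hdeg : ∀ x : V, 0 < deg H x)
    (l : ℝ) (hl : 0 < l) (f : V → ℝ) (hf : f ∈ Lip1 H) (n : ℕ) (x y : V) :
    inn H ((Resolvent H l)^[n] f) (delta x - delta y) ≤
      (1 - sInf {r : ℝ | ∃ a b : V, a ≠ b ∧ r = kappa H l a b}) ^ n * gdist H x y := by
  have hC : 0 ≤ 1 - kappaMin H l := sub_nonneg.2 (kappaMin_le_one H hdeg hl.le)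
  suffices h : ∀ x y, inn H ((Resolvent H l)^[n] f) (delta x - delta y) ≤
      (1 - kappaMin H l) ^ n * gdist H x y from h x y
  induction n with
  | zero => exact fun x y => by simpa using hf x y
  | succ n ih =>
    rw [Function.iterate_succ_apply', pow_succ]
    exact inn_Resolvent_le_of_forall_le H hconn hdeg hl.le (pow_nonneg hC n) ih

/-- discrete gradient estimate: with `κ_λ := min_{x≠y} κ_λ(x,y)`,
for every weighted 1-Lipschitz `f`, every `n` and all `x, y`,
`⟨J_λ^n f, δ_x − δ_y⟩ ≤ (1 − κ_λ)^n d(x,y)`. -/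
theorem stmt17 [Nonempty V] (H : Hypergraph V) (hconn : Connected H)
    (hdeg : ∀ x : V, 0 < deg H x) (hV : 2 ≤ Fintype.card V)
    (l : ℝ) (hl : 0 < l) (f : V → ℝ) (hf : f ∈ Lip1 H) (n : ℕ) (x y : V) :
    inn H ((Resolvent H l)^[n] f) (delta x - delta y) ≤
      (1 - sInf {r : ℝ | ∃ a b : V, a ≠ b ∧ r = kappa H l a b}) ^ n * gdist H x y :=
  stmt17_general H hconn hdeg l hl f hf n x y

end HypRicci
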